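/- Let α, β, γ, δ be real numbers. On ℝ³ with standard basis e₁, e₂, e₃, let the bracket be the bilinear antisymmetric map determined by [e₁,e₂] = α•e₂ + β•e₃, [e₁,e₃] = γ•e₂ + δ•e₃, [e₂,e₃] = 0 (the Lie algebra of G₆), and let ∇ be the bilinear map ℝ³ → ℝ³ → ℝ³ determined on basis vectors by ∇_{e₁}e₁ = 0, ∇_{e₂}e₁ = -α•e₂ - ((β-γ)/2)•e₃, ∇_{e₃}e₁ = ((β-γ)/2)•e₂ - δ•e₃, ∇_{e₁}e₂ = ((β+γ)/2)•e₃, ∇_{e₂}e₂ = α•e₁, ∇_{e₃}e₂ = -((β-γ)/2)•e₁, ∇_{e₁}e₃ = ((β+γ)/2)•e₂, ∇_{e₂}e₃ = -((β-γ)/2)•e₁, ∇_{e₃}e₃ = -δ•e₁. Then for all X, Y, Z ∈ ℝ³, 2*g(∇_X Y, Z) = g([X,Y], Z) - g([Y,Z], X) + g([Z,X], Y), i.e. ∇ satisfies the Koszul formula characterizing the Levi-Civita connection of the left-invariant Lorentzian metric g. -/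

import Mathlib

noncomputable section

/-- The standard basis of `ℝ³`. -/
def e₁ : Fin 3 → ℝ := ![1, 0, 0]
def e₂ : Fin 3 → ℝ := ![0, 1, 0]
def e₃ : Fin 3 → ℝ := ![0, 0, 1]

/-- The Lorentzian inner product with `e₁, e₂, e₃` pseudo-orthonormal, `e₃` timelike. -/
def g (X Y : Fin 3 → ℝ) : ℝ := X 0 * Y 0 + X 1 * Y 1 - X 2 * Y 2

/-- The bilinear antisymmetric bracket of the Lie algebra of `G₆`:
`[e₁,e₂] = αe₂ + βe₃`, `[e₁,e₃] = γe₂ + δe₃`, `[e₂,e₃] = 0`. -/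
def bracket (α β γ δ : ℝ) (X Y : Fin 3 → ℝ) : Fin 3 → ℝ :=
  (X 0 * Y 1 - X 1 * Y 0) • (α • e₂ + β • e₃) +
  (X 0 * Y 2 - X 2 * Y 0) • (γ • e₂ + δ • e₃) +
  (X 1 * Y 2 - X 2 * Y 1) • (0 : Fin 3 → ℝ)

/-- The candidate Levi-Civita connection of `G₆`, extended bilinearly from its
values on the basis vectors. -/
def nabla (α β γ δ : ℝ) (X Y : Fin 3 → ℝ) : Fin 3 → ℝ :=
  (X 0 * Y 0) • (0 : Fin 3 → ℝ) +
  (X 0 * Y 1) • (((β+γ)/2) • e₃) +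
  (X 0 * Y 2) • (((β+γ)/2) • e₂) +
  (X 1 * Y 0) • (-α • e₂ - ((β-γ)/2) • e₃) +
  (X 1 * Y 1) • (α • e₁) +
  (X 1 * Y 2) • (-((β-γ)/2) • e₁) +
  (X 2 * Y 0) • (((β-γ)/2) • e₂ - δ • e₃) +
  (X 2 * Y 1) • (-((β-γ)/2) • e₁) +
  (X 2 * Y 2) • (-δ • e₁)

theorem bracket_eq (α β γ δ : ℝ) (X Y : Fin 3 → ℝ) :
    bracket α β γ δ X Y =
      ![0, α * (X 0 * Y 1 - X 1 * Y 0) + γ * (X 0 * Y 2 - X 2 * Y 0),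
        β * (X 0 * Y 1 - X 1 * Y 0) + δ * (X 0 * Y 2 - X 2 * Y 0)] := by
  ext i
  fin_cases i <;> simp only [bracket, e₂, e₃, Pi.add_apply, Pi.smul_apply, Pi.zero_apply,
    smul_eq_mul, Fin.zero_eta, Fin.mk_one, Fin.reduceFinMk, Matrix.cons_val] <;> ring

theorem nabla_eq (α β γ δ : ℝ) (X Y : Fin 3 → ℝ) :
    nabla α β γ δ X Y =
      ![α * X 1 * Y 1 - (β - γ) / 2 * (X 1 * Y 2 + X 2 * Y 1) - δ * X 2 * Y 2,
        (β + γ) / 2 * X 0 * Y 2 - α * X 1 * Y 0 + (β - γ) / 2 * X 2 * Y 0,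
        (β + γ) / 2 * X 0 * Y 1 - (β - γ) / 2 * X 1 * Y 0 - δ * X 2 * Y 0] := by
  ext i
  fin_cases i <;> simp only [nabla, e₁, e₂, e₃, Pi.add_apply, Pi.sub_apply, Pi.smul_apply,
    Pi.zero_apply, smul_eq_mul, Fin.zero_eta, Fin.mk_one, Fin.reduceFinMk, Matrix.cons_val] <;> ring

/-- `∇` satisfies the Koszul formula characterizing the Levi-Civita connection
of the left-invariant Lorentzian metric `g` on `G₆`. -/
theorem G6_LeviCivita_Koszul (α β γ δ : ℝ) (X Y Z : Fin 3 → ℝ) :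
    2 * g (nabla α β γ δ X Y) Z =
      g (bracket α β γ δ X Y) Z - g (bracket α β γ δ Y Z) X + g (bracket α β γ δ Z X) Y := by
  simp only [nabla_eq, bracket_eq, g, Matrix.cons_val_zero, Matrix.cons_val_one,
    Matrix.cons_val_two, Matrix.head_cons, Matrix.tail_cons]
  ring

end
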